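/- Let p be a prime, r ≥ 1, and R = ℤ/p^rℤ. Let G(z) ∈ Mat_{n×k}(R[z]) be an injective polynomial matrix with column degrees ν_1, …, ν_k whose column-wise leading coefficient matrix G_h ∈ Mat_{n×k}(R) is injective (the Predictable Degree Property). Then the maximum of the degrees of the k×k (full-size) minors of G(z) equals δ_{G(z)} = Σ_{i=1}^k ν_i. -/

import Mathlib

/-- The `i`-th constraint length of a polynomial matrix `G(z)`: the maximum
degree of the entries of the `i`-th column. -/
def constraintLength {R : Type*} [Semiring R] {n k : ℕ}
    (G : Matrix (Fin n) (Fin k) (Polynomial R)) (i : Fin k) : ℕ :=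
  Finset.univ.sup fun j => (G j i).natDegree

/-- The complexity (degree) of a polynomial matrix: the sum of its
constraint lengths. -/
def complexity {R : Type*} [Semiring R] {n k : ℕ}
    (G : Matrix (Fin n) (Fin k) (Polynomial R)) : ℕ :=
  ∑ i, constraintLength G i

/-- The column-wise leading coefficient matrix `G_h` of `G(z)`: its `(j,i)`
entry is the coefficient of `z^{ν_i}` in the `(j,i)` entry of `G(z)`. -/
def leadingCoeffMatrix {R : Type*} [Semiring R] {n k : ℕ}
    (G : Matrix (Fin n) (Fin k) (Polynomial R)) : Matrix (Fin n) (Fin k) R :=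
  fun j i => (G j i).coeff (constraintLength G i)

/-! The `z^δ` coefficient of a full-size minor of `G(z)` is the corresponding minor of `G_h`, and
no minor has larger degree. So it suffices to find a nonzero full-size minor of `G_h`. Reducing
modulo `p` keeps `G_h` injective, because `p^(r-1) x = 0` in `ℤ/p^r` exactly when `p ∣ x`; over the
field `𝔽_p` an injective matrix has `k` linearly independent rows, hence a nonzero `k × k` minor,
and that minor lifts to a nonzero minor of `G_h`. -/

open Polynomial Matrix

theorem Polynomial.coeff_prod_sum_of_natDegree_le {R ι : Type*} [CommSemiring R] (s : Finset ι)
    (f : ι → R[X]) (d : ι → ℕ) (h : ∀ i ∈ s, (f i).natDegree ≤ d i) :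
    (∏ i ∈ s, f i).coeff (∑ i ∈ s, d i) = ∏ i ∈ s, (f i).coeff (d i) := by
  classical
  induction s using Finset.induction with
  | empty => simp
  | insert a s ha ih =>
    rw [Finset.forall_mem_insert] at h
    rw [Finset.prod_insert ha, Finset.sum_insert ha, Finset.prod_insert ha,
      coeff_mul_add_eq_of_natDegree_le h.1
        ((natDegree_prod_le s f).trans (Finset.sum_le_sum h.2)), ih h.2]

section ColumnDegrees

variable {R n : Type*} [CommRing R] [Fintype n] [DecidableEq n] (M : Matrix n n R[X]) (d : n → ℕ)

theorem Matrix.natDegree_det_le_sum_of_natDegree_le (hM : ∀ j i, (M j i).natDegree ≤ d i) :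
    M.det.natDegree ≤ ∑ i, d i := by
  rw [det_apply]
  refine natDegree_sum_le_of_forall_le _ _ fun σ _ => ?_
  rw [Units.smul_def, zsmul_eq_mul]
  refine natDegree_mul_le.trans ?_
  rw [natDegree_intCast, zero_add]
  exact (natDegree_prod_le _ _).trans (Finset.sum_le_sum fun i _ => hM (σ i) i)

theorem Matrix.coeff_det_sum_of_natDegree_le (hM : ∀ j i, (M j i).natDegree ≤ d i) :
    M.det.coeff (∑ i, d i) = (Matrix.of fun j i => (M j i).coeff (d i)).det := by
  simp only [det_apply, finsetSum_coeff, Units.smul_def, zsmul_eq_mul, coeff_intCast_mul,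
    of_apply]
  refine Finset.sum_congr rfl fun σ _ => ?_
  rw [coeff_prod_sum_of_natDegree_le _ _ _ fun i _ => hM (σ i) i]

end ColumnDegrees

section FullSizeMinors

variable {R : Type*} [CommRing R] {n k : ℕ} (G : Matrix (Fin n) (Fin k) R[X])

theorem natDegree_le_constraintLength (j : Fin n) (i : Fin k) :
    (G j i).natDegree ≤ constraintLength G i :=
  Finset.le_sup (f := fun j => (G j i).natDegree) (Finset.mem_univ j)

theorem natDegree_det_submatrix_le_complexity (ρ : Fin k ↪ Fin n) :
    (G.submatrix ρ id).det.natDegree ≤ complexity G :=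
  natDegree_det_le_sum_of_natDegree_le _ _ fun j i => natDegree_le_constraintLength G (ρ j) i

theorem coeff_complexity_det_submatrix (ρ : Fin k ↪ Fin n) :
    (G.submatrix ρ id).det.coeff (complexity G) = ((leadingCoeffMatrix G).submatrix ρ id).det :=
  coeff_det_sum_of_natDegree_le _ _ fun j i => natDegree_le_constraintLength G (ρ j) i

theorem sup_natDegree_det_submatrix_eq_complexity
    (h : ∃ ρ : Fin k ↪ Fin n, ((leadingCoeffMatrix G).submatrix ρ id).det ≠ 0) :
    (Finset.univ.sup fun ρ : Fin k ↪ Fin n => (G.submatrix ρ id).det.natDegree) =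
      complexity G := by
  obtain ⟨ρ, hρ⟩ := h
  refine le_antisymm (Finset.sup_le fun ρ _ => natDegree_det_submatrix_le_complexity G ρ) ?_
  calc complexity G ≤ (G.submatrix ρ id).det.natDegree :=
        le_natDegree_of_ne_zero (by rwa [coeff_complexity_det_submatrix])
    _ ≤ _ := Finset.le_sup (f := fun ρ : Fin k ↪ Fin n => (G.submatrix ρ id).det.natDegree)
        (Finset.mem_univ ρ)

end FullSizeMinors

theorem Matrix.exists_det_submatrix_ne_zero_of_injective {K m : Type*} [Field K] [Fintype m]
    {k : ℕ} (A : Matrix m (Fin k) K) (hA : Function.Injective A.mulVecLin) :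
    ∃ ρ : Fin k ↪ m, (A.submatrix ρ id).det ≠ 0 := by
  have hrank : A.rank = k := by
    rw [rank, LinearMap.finrank_range_of_inj hA, Module.finrank_fin_fun]
  obtain ⟨κ, a, ha, hspan, hli⟩ := exists_linearIndependent' K A.row
  have : Fintype κ := Fintype.ofInjective a ha
  have hcard : Fintype.card κ = k := by
    rw [linearIndependent_iff_card_eq_finrank_span.mp hli, Set.finrank, hspan,
      ← rank_eq_finrank_span_row, hrank]
  let e : Fin k ≃ κ := (Fintype.equivFinOfCardEq hcard).symm
  refine ⟨e.toEmbedding.trans ⟨a, ha⟩, ?_⟩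
  have hrows : LinearIndependent K (A.submatrix (e.toEmbedding.trans ⟨a, ha⟩) id).row :=
    hli.comp e e.injective
  exact ((isUnit_iff_isUnit_det _).mp (linearIndependent_rows_iff_isUnit.mp hrows)).ne_zero

theorem Matrix.mulVec_injective_map {R S m n : Type*} [CommRing R] [CommRing S] [Fintype n]
    (f : R →+* S) (hf : Function.Surjective f) (a : R) (ha : ∀ x, a * x = 0 ↔ f x = 0)
    (A : Matrix m n R) (hA : Function.Injective A.mulVec) :
    Function.Injective (A.map f).mulVec := by
  refine (injective_iff_map_eq_zero (A.map f).mulVecLin).2 fun w hw => ?_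
  obtain ⟨v, rfl⟩ : ∃ v, f ∘ v = w := ⟨fun i => (hf (w i)).choose,
    funext fun i => (hf (w i)).choose_spec⟩
  have hav : A *ᵥ (a • v) = A *ᵥ 0 := by
    ext j
    rw [mulVec_smul, mulVec_zero, Pi.smul_apply, smul_eq_mul, Pi.zero_apply, ha,
      RingHom.map_mulVec]
    exact congrFun hw j
  funext i
  exact (ha _).1 (congrFun (hA hav) i)

theorem ZMod.pow_pred_mul_eq_zero_iff {p r : ℕ} (hp : p ≠ 0) (hr : r ≠ 0) (x : ZMod (p ^ r)) :
    (p : ZMod (p ^ r)) ^ (r - 1) * x = 0 ↔ ZMod.castHom (dvd_pow_self p hr) (ZMod p) x = 0 := by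
  have : NeZero (p ^ r) := ⟨pow_ne_zero r hp⟩
  obtain ⟨m, rfl⟩ := ZMod.natCast_zmod_surjective x
  rw [map_natCast, ← Nat.cast_pow, ← Nat.cast_mul, ZMod.natCast_eq_zero_iff,
    ZMod.natCast_eq_zero_iff, ← Nat.sub_add_cancel (Nat.one_le_iff_ne_zero.2 hr), pow_succ,
    Nat.add_sub_cancel, Nat.mul_dvd_mul_iff_left (pow_pos (Nat.pos_of_ne_zero hp) _)]

theorem pdp_max_minor_degree_general (p r n k : ℕ) (hp : p.Prime) (hr : 1 ≤ r)
    (G : Matrix (Fin n) (Fin k) (Polynomial (ZMod (p ^ r))))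
    (hPDP : Function.Injective (leadingCoeffMatrix G).mulVecLin) :
    (Finset.univ.sup fun ρ : Fin k ↪ Fin n =>
        ((G.submatrix ρ id).det).natDegree) = complexity G := by
  have : Fact p.Prime := ⟨hp⟩
  have hr0 : r ≠ 0 := Nat.one_le_iff_ne_zero.1 hr
  set f := ZMod.castHom (dvd_pow_self p hr0) (ZMod p)
  have hmod : Function.Injective ((leadingCoeffMatrix G).map f).mulVecLin :=
    mulVec_injective_map f (ZMod.castHom_surjective _) _
      (ZMod.pow_pred_mul_eq_zero_iff hp.ne_zero hr0) _ hPDP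
  obtain ⟨ρ, hρ⟩ := exists_det_submatrix_ne_zero_of_injective _ hmod
  refine sup_natDegree_det_submatrix_eq_complexity G ⟨ρ, fun h => hρ ?_⟩
  rw [submatrix_map, ← RingHom.mapMatrix_apply, ← RingHom.map_det, h, map_zero]

/-- Let `p` be a prime, `r ≥ 1`, and `R = ℤ/p^rℤ`. Let
`G(z) ∈ Mat_{n×k}(R[z])` (with `n ≥ k`) be an injective polynomial matrix with
column degrees `ν_1, …, ν_k` whose column-wise leading coefficient matrix
`G_h ∈ Mat_{n×k}(R)` is injective (the Predictable Degree Property). Then the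
maximum of the degrees of the `k×k` (full-size) minors of `G(z)` equals
`δ_{G(z)} = Σ_i ν_i`. -/
theorem pdp_max_minor_degree (p r n k : ℕ) (hp : p.Prime) (hr : 1 ≤ r) (hkn : k ≤ n)
    (G : Matrix (Fin n) (Fin k) (Polynomial (ZMod (p ^ r))))
    (hGinj : Function.Injective G.mulVecLin)
    (hPDP : Function.Injective (leadingCoeffMatrix G).mulVecLin) :
    (Finset.univ.sup fun ρ : Fin k ↪ Fin n =>
        ((G.submatrix ρ id).det).natDegree) = complexity G :=
  pdp_max_minor_degree_general p r n k hp hr G hPDP
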